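/- arXiv:2412.04928 — 2 statements merged into one kernel-verified Lean document; each statement's English description precedes it below -/
import Mathlib

section
/- The set V = ∪_{i≥0} V_i, where V_0 = −S(L) and V_{i+1} = ∪_{v ∈ V_i} π(Ψ(v)), is a well-ordered subset of ℚ. -/
open Polynomial Finset

noncomputable def PL {K : Type*} [Field K] (ℓ n : ℕ) (a : ℕ → Polynomial K) : Finset (ℚ × ℚ) :=
  (Finset.range (n + 1)).biUnion fun i =>
    (a i).support.image fun j : ℕ => ((ℓ : ℚ) ^ i, (j : ℚ))

noncomputable def PsiSet {K : Type*} [Field K] (ℓ n : ℕ) (a : ℕ → Polynomial K) (v : ℚ) :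
    Finset ℚ :=
  (PL ℓ n a).image fun p => v * p.1 + p.2

noncomputable def psi {K : Type*} [Field K] (ℓ n : ℕ) (a : ℕ → Polynomial K) (v : ℚ) : ℚ :=
  WithTop.untopD 0 ((PsiSet ℓ n a v).min)

noncomputable def piF {K : Type*} [Field K] (ℓ n : ℕ) (a : ℕ → Polynomial K) (q : ℚ) : ℚ :=
  WithBot.unbotD 0 (((PL ℓ n a).image fun p => (q - p.2) / p.1).max)

def slopeSet {K : Type*} [Field K] (ℓ n : ℕ) (a : ℕ → Polynomial K) : Set ℚ :=
  {μ | ∃ b : ℚ,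
    (∃ p ∈ PL ℓ n a, ∃ q ∈ PL ℓ n a, p ≠ q ∧ p.2 - μ * p.1 = b ∧ q.2 - μ * q.1 = b) ∧
    ∀ p ∈ PL ℓ n a, b ≤ p.2 - μ * p.1}

noncomputable def scaleEmb (ℓ : ℕ) (hℓ : 2 ≤ ℓ) (i : ℕ) : ℚ ↪o ℚ :=
  (OrderIso.mulLeft₀ ((ℓ : ℚ) ^ i)
    (pow_pos (by exact_mod_cast Nat.lt_of_lt_of_le Nat.zero_lt_two hℓ) i)).toOrderEmbedding

noncomputable def mahlerOp {K : Type*} [Field K] (ℓ : ℕ) (hℓ : 2 ≤ ℓ) (n : ℕ)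
    (a : ℕ → Polynomial K) (f : HahnSeries ℚ K) : HahnSeries ℚ K :=
  ∑ i ∈ Finset.range (n + 1),
    (HahnSeries.ofPowerSeries ℚ K (a i : PowerSeries K)) *
      HahnSeries.embDomain (scaleEmb ℓ hℓ i) f

noncomputable def VSeq {K : Type*} [Field K] (ℓ n : ℕ) (a : ℕ → Polynomial K) : ℕ → Set ℚ
  | 0 => Neg.neg '' slopeSet ℓ n a
  | i + 1 => ⋃ v ∈ VSeq ℓ n a i, ((PsiSet ℓ n a v).image (piF ℓ n a) : Set ℚ)

noncomputable def VSet {K : Type*} [Field K] (ℓ n : ℕ) (a : ℕ → Polynomial K) : Set ℚ :=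
  ⋃ i, VSeq ℓ n a i

/-!
Each step `v ↦ π(v ℓ^i + j)` is a monotone map (`π` is a maximum of increasing affine maps) that
does not decrease its argument, and there are only finitely many such maps. Given a strictly
decreasing sequence in `V`, pigeonhole yields a subsequence `w_k = T v_k` for a single map `T`;
then the `v_k` decrease strictly as well, lie below the `w_k` and are born one generation earlier.
Applied to a minimal bad sequence in the sense of Nash-Williams this is a contradiction, since
the finitely many elements of `V_0` cannot carry an infinite decreasing sequence.
-/

open Filter

theorem Set.isWF_of_exists_monotone_step {α : Type*} [LinearOrder α] {s t : Set α}
    {F : Set (α → α)} (ht : t.Finite) (hF : F.Finite) (hmono : ∀ T ∈ F, Monotone T) (rk : α → ℕ)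
    (hstep : ∀ w ∈ s, w ∉ t → ∃ T ∈ F, ∃ v ∈ s, v ≤ w ∧ T v = w ∧ rk v < rk w) :
    s.IsWF := by
  rw [← Set.isPWO_iff_isWF, Set.IsPWO, Set.PartiallyWellOrderedOn.iff_not_exists_isMinBadSeq rk]
  rintro ⟨f, ⟨hfs, hbad⟩, hmin⟩
  have hanti : StrictAnti f :=
    strictAnti_nat_of_succ_lt fun n => lt_of_not_ge (hbad n _ n.lt_succ_self)
  have hout : ∀ᶠ n in atTop, f n ∉ t := by
    rw [← Nat.cofinite_eq_atTop]
    exact hanti.injective.tendsto_cofinite.eventually ht.eventually_cofinite_notMem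
  obtain ⟨T, hT, hfreq⟩ := hF.frequently_exists.mp
    (hout.mono fun n hn => hstep (f n) (hfs n) hn).frequently
  obtain ⟨φ, hφ, hφT⟩ := extraction_of_frequently_atTop hfreq
  choose v hvs hvle hTv hrk using hφT
  -- the bad sequence `f 0, …, f (φ 0 - 1), v 0, v 1, …` lies below `f` with a smaller rank at `φ 0`
  refine hmin (φ 0) (fun m => if m < φ 0 then f m else v (m - φ 0)) (fun m hm => by simp [hm])
    (by simpa using hrk 0) ⟨fun m => ?_, fun m k hmk => ?_⟩
  · dsimp only
    split_ifs
    exacts [hfs m, hvs _]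
  · have hv_anti : StrictAnti v := fun i j hij =>
      lt_of_not_ge fun hle => (hanti (hφ hij)).not_ge <| by
        rw [← hTv i, ← hTv j]
        exact hmono T hT hle
    dsimp only
    split_ifs with h1 h2 h2
    · exact not_le.mpr (hanti hmk)
    · exact not_le.mpr ((hvle _).trans_lt (hanti (h1.trans_le (hφ.monotone (Nat.zero_le _)))))
    · omega
    · exact not_le.mpr (hv_anti (by omega))

theorem Set.isWF_iUnion_of_monotone_step {α : Type*} [LinearOrder α] {V : ℕ → Set α}
    {F : Set (α → α)} (h0 : (V 0).Finite) (hF : F.Finite) (hmono : ∀ T ∈ F, Monotone T)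
    (hstep : ∀ k, ∀ w ∈ V (k + 1), ∃ T ∈ F, ∃ v ∈ V k, v ≤ w ∧ T v = w) :
    (⋃ k, V k).IsWF := by
  classical
  let rk : α → ℕ := fun w => if h : ∃ k, w ∈ V k then Nat.find h else 0
  refine Set.isWF_of_exists_monotone_step h0 hF hmono rk fun w hw hw0 => ?_
  have hex : ∃ k, w ∈ V k := Set.mem_iUnion.mp hw
  obtain ⟨j, hj⟩ : ∃ j, Nat.find hex = j + 1 :=
    Nat.exists_eq_succ_of_ne_zero fun h => hw0 (h ▸ Nat.find_spec hex)
  obtain ⟨T, hT, v, hv, hvw, rfl⟩ := hstep j w (hj ▸ Nat.find_spec hex)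
  refine ⟨T, hT, v, Set.mem_iUnion.mpr ⟨j, hv⟩, hvw, rfl, ?_⟩
  have hv' : ∃ k, v ∈ V k := ⟨j, hv⟩
  simp only [rk, dif_pos hex, dif_pos hv', hj]
  exact Nat.lt_succ_of_le (Nat.find_min' hv' hv)

section Mahler

variable {K : Type*} [Field K] {ℓ n : ℕ} {a : ℕ → Polynomial K}

lemma exists_pow_eq_fst_of_mem_PL {p : ℚ × ℚ} (hp : p ∈ PL ℓ n a) : ∃ i : ℕ, p.1 = (ℓ : ℚ) ^ i := by
  simp only [PL, Finset.mem_biUnion, Finset.mem_image] at hp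
  obtain ⟨i, -, j, -, rfl⟩ := hp
  exact ⟨i, rfl⟩

lemma piF_eq_max' (h : (PL ℓ n a).Nonempty) (q : ℚ) :
    piF ℓ n a q = ((PL ℓ n a).image fun p => (q - p.2) / p.1).max' (h.image _) := by
  rw [piF, ← Finset.coe_max' (h.image _)]
  rfl

lemma div_le_piF {p : ℚ × ℚ} (hp : p ∈ PL ℓ n a) (q : ℚ) : (q - p.2) / p.1 ≤ piF ℓ n a q := by
  rw [piF_eq_max' ⟨p, hp⟩]
  exact Finset.le_max' _ _ (Finset.mem_image_of_mem (fun p : ℚ × ℚ => (q - p.2) / p.1) hp)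

lemma exists_piF_eq (h : (PL ℓ n a).Nonempty) (q : ℚ) :
    ∃ p ∈ PL ℓ n a, piF ℓ n a q = (q - p.2) / p.1 := by
  obtain ⟨p, hp, hmax⟩ :=
    Finset.mem_image.mp (Finset.max'_mem _ (h.image fun p : ℚ × ℚ => (q - p.2) / p.1))
  exact ⟨p, hp, by rw [piF_eq_max' h, hmax]⟩

lemma piF_monotone : Monotone (piF ℓ n a) := by
  rcases (PL ℓ n a).eq_empty_or_nonempty with h | h
  · intro q q' _
    simp [piF, h]
  · intro q q' hqq'
    obtain ⟨p, hp, hq⟩ := exists_piF_eq h q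
    obtain ⟨i, hi⟩ := exists_pow_eq_fst_of_mem_PL hp
    calc piF ℓ n a q = (q - p.2) / p.1 := hq
      _ ≤ (q' - p.2) / p.1 := by gcongr; rw [hi]; positivity
      _ ≤ piF ℓ n a q' := div_le_piF hp q'

lemma le_piF_mul_add (hℓ : 0 < ℓ) {p : ℚ × ℚ} (hp : p ∈ PL ℓ n a) (v : ℚ) :
    v ≤ piF ℓ n a (v * p.1 + p.2) := by
  obtain ⟨i, hi⟩ := exists_pow_eq_fst_of_mem_PL hp
  have hp1 : p.1 ≠ 0 := by rw [hi]; positivity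
  simpa [hp1] using div_le_piF hp (v * p.1 + p.2)

lemma monotone_piF_mul_add {p : ℚ × ℚ} (hp : p ∈ PL ℓ n a) :
    Monotone fun v : ℚ => piF ℓ n a (v * p.1 + p.2) := by
  obtain ⟨i, hi⟩ := exists_pow_eq_fst_of_mem_PL hp
  exact piF_monotone.comp ((monotone_mul_right_of_nonneg (by rw [hi]; positivity)).add_const _)

lemma exists_piF_eq_of_mem_VSeq_succ {k : ℕ} {w : ℚ} (hw : w ∈ VSeq ℓ n a (k + 1)) :
    ∃ p ∈ PL ℓ n a, ∃ v ∈ VSeq ℓ n a k, piF ℓ n a (v * p.1 + p.2) = w := by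
  simp only [VSeq, Set.mem_iUnion, Finset.coe_image, Set.mem_image, Finset.mem_coe, PsiSet] at hw
  obtain ⟨v, hv, _, ⟨p, hp, rfl⟩, rfl⟩ := hw
  exact ⟨p, hp, v, hv, rfl⟩

lemma slopeSet_finite : (slopeSet ℓ n a).Finite := by
  refine ((PL ℓ n a ×ˢ PL ℓ n a).image fun pq : (ℚ × ℚ) × (ℚ × ℚ) =>
    (pq.1.2 - pq.2.2) / (pq.1.1 - pq.2.1)).finite_toSet.subset ?_
  rintro μ ⟨b, ⟨p, hp, q, hq, hpq, hpb, hqb⟩, -⟩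
  have hfst : p.1 ≠ q.1 := fun h => hpq (Prod.ext h (by linear_combination hpb - hqb + μ * h))
  refine Finset.mem_image.mpr ⟨(p, q), Finset.mem_product.mpr ⟨hp, hq⟩, ?_⟩
  rw [div_eq_iff (sub_ne_zero.mpr hfst)]
  linear_combination hpb - hqb

end Mahler

theorem stmt10_general {K : Type*} [Field K] (ℓ n : ℕ) (hℓ : 2 ≤ ℓ) (a : ℕ → Polynomial K) :
    (VSet ℓ n a).IsWF := by
  refine Set.isWF_iUnion_of_monotone_step
    (F := (fun (p : ℚ × ℚ) v => piF ℓ n a (v * p.1 + p.2)) '' PL ℓ n a)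
    (slopeSet_finite.image _) ((PL ℓ n a).finite_toSet.image _)
    (fun _ ⟨_, hp, hT⟩ => hT ▸ monotone_piF_mul_add hp) fun k w hw => ?_
  obtain ⟨p, hp, v, hv, rfl⟩ := exists_piF_eq_of_mem_VSeq_succ hw
  exact ⟨_, ⟨p, hp, rfl⟩, v, hv, le_piF_mul_add (by omega) hp v, rfl⟩

theorem stmt10 {K : Type*} [Field K] (ℓ n : ℕ) (hℓ : 2 ≤ ℓ) (a : ℕ → Polynomial K)
    (h0 : a 0 ≠ 0) (hn : a n ≠ 0) :
    (VSet ℓ n a).IsWF :=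
  stmt10_general ℓ n hℓ a
end

section
/- Every Hahn series solution f of L(f) = 0 has support contained in the set V = ∪_{i≥0} V_i, where V_0 = −S(L) and V_{i+1} = ∪_{v ∈ V_i} π(Ψ(v)). -/
/-!
Induct on `w ∈ supp f`, which is well-ordered. Put `q = psi w = min {w ℓ^i + j : (ℓ^i, j) ∈ P(L)}`.
The coefficient of `z^q` in `L f` is `∑ a_{ij} f_{(q - j)/ℓ^i}`; every index `(q - j)/ℓ^i` is `≤ w`,
with equality exactly at the points of `P(L)` where the minimum is attained. If it is attained
twice, `-w` is a slope of the Newton polygon, so `w ∈ V₀`. Otherwise the nonzero term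
`a_{i₀j₀} f_w` must be cancelled by some `f_v ≠ 0` with `v < w` and `q ∈ Ψ(v)`; by induction
`v ∈ Vₘ`, and `π(q) = w` puts `w` in `Vₘ₊₁`.
-/

open Polynomial Finset

namespace HahnSeries

variable {Γ R : Type*} [Ring Γ] [PartialOrder Γ] [IsStrictOrderedRing Γ] [Semiring R]

theorem ofPowerSeries_polynomial (p : R[X]) :
    ofPowerSeries Γ R (p : PowerSeries R) = ∑ j ∈ p.support, single (j : Γ) (p.coeff j) := by
  conv_lhs => rw [p.as_sum_support_C_mul_X_pow]
  rw [← Polynomial.coeToPowerSeries.ringHom_apply, map_sum, map_sum]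
  refine sum_congr rfl fun j _ => ?_
  simp only [coeToPowerSeries.ringHom_apply, coe_C, coe_X,
    map_mul, ofPowerSeries_C, C_apply, map_pow, ofPowerSeries_X, single_pow, nsmul_eq_mul,
    mul_one, one_pow, single_mul_single, zero_add]

theorem coeff_ofPowerSeries_polynomial_mul (p : R[X]) (x : HahnSeries Γ R) (g : Γ) :
    (ofPowerSeries Γ R p * x).coeff g = ∑ j ∈ p.support, p.coeff j * x.coeff (g - j) := by
  rw [ofPowerSeries_polynomial, sum_mul, coeff_sum]
  exact sum_congr rfl fun j _ => coeff_single_mul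

end HahnSeries

theorem Finset.exists_ne_ne_zero_of_sum_eq_zero {ι M : Type*} [AddCommMonoid M] {s : Finset ι}
    {g : ι → M} {i₀ : ι} (hi₀ : i₀ ∈ s) (hs : ∑ i ∈ s, g i = 0) (hg : g i₀ ≠ 0) :
    ∃ i ∈ s, i ≠ i₀ ∧ g i ≠ 0 := by
  by_contra! h
  exact hg (hs ▸ (sum_eq_single_of_mem i₀ hi₀ h).symm)

section Mahler

variable {K : Type*} [Field K] {ℓ n : ℕ} {a : ℕ → K[X]} {w : ℚ}

def termSupport (n : ℕ) (a : ℕ → K[X]) : Finset (Σ _ : ℕ, ℕ) :=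
  (range (n + 1)).sigma fun i => (a i).support

def newtonPoint (ℓ : ℕ) (x : Σ _ : ℕ, ℕ) : ℚ × ℚ :=
  ((ℓ : ℚ) ^ x.1, x.2)

theorem PL_eq_image : PL ℓ n a = (termSupport n a).image (newtonPoint ℓ) := by
  ext p
  simp [PL, termSupport, newtonPoint, and_assoc]

theorem mem_PL_iff {p : ℚ × ℚ} :
    p ∈ PL ℓ n a ↔ ∃ x ∈ termSupport n a, newtonPoint ℓ x = p := by
  rw [PL_eq_image, mem_image]

theorem newtonPoint_mem_PL {x : Σ _ : ℕ, ℕ} (hx : x ∈ termSupport n a) :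
    newtonPoint ℓ x ∈ PL ℓ n a :=
  mem_PL_iff.2 ⟨x, hx, rfl⟩

theorem newtonPoint_injective (hℓ : 1 < ℓ) : Function.Injective (newtonPoint ℓ) := by
  rintro ⟨i, j⟩ ⟨i', j'⟩ h
  obtain ⟨hi, hj⟩ := Prod.mk.inj h
  simp only at hi hj
  rw [pow_right_injective₀ (by positivity) (by exact_mod_cast hℓ.ne') hi, Nat.cast_injective hj]

theorem PL_nonempty (h0 : a 0 ≠ 0) : (PL ℓ n a).Nonempty := by
  rw [PL_eq_image, image_nonempty]
  exact ⟨⟨0, (a 0).natDegree⟩, mem_sigma.2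
    ⟨mem_range.2 n.succ_pos, natDegree_mem_support_of_nonzero h0⟩⟩

theorem fst_pos_of_mem_PL (hℓ : 0 < ℓ) {p : ℚ × ℚ} (hp : p ∈ PL ℓ n a) : 0 < p.1 := by
  obtain ⟨x, -, rfl⟩ := mem_PL_iff.1 hp
  exact pow_pos (by exact_mod_cast hℓ) x.1

theorem coeff_embDomain_scaleEmb (hℓ : 2 ≤ ℓ) (i : ℕ) (f : HahnSeries ℚ K) (x : ℚ) :
    (HahnSeries.embDomain (scaleEmb ℓ hℓ i) f).coeff x = f.coeff (x / ℓ ^ i) := by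
  have hx : x = scaleEmb ℓ hℓ i (x / ℓ ^ i) := by
    show x = (ℓ : ℚ) ^ i * (x / ℓ ^ i)
    field_simp
  conv_lhs => rw [hx]
  exact HahnSeries.embDomain_coeff

theorem coeff_mahlerOp (hℓ : 2 ≤ ℓ) (f : HahnSeries ℚ K) (q : ℚ) :
    (mahlerOp ℓ hℓ n a f).coeff q =
      ∑ x ∈ termSupport n a, (a x.1).coeff x.2 * f.coeff ((q - x.2) / ℓ ^ x.1) := by
  simp only [mahlerOp, termSupport, HahnSeries.coeff_sum, sum_sigma,
    HahnSeries.coeff_ofPowerSeries_polynomial_mul, coeff_embDomain_scaleEmb]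

theorem psi_eq_min' (h : (PsiSet ℓ n a w).Nonempty) : psi ℓ n a w = (PsiSet ℓ n a w).min' h := by
  rw [psi, ← coe_min' h]
  rfl

theorem psi_le {p : ℚ × ℚ} (hp : p ∈ PL ℓ n a) : psi ℓ n a w ≤ w * p.1 + p.2 := by
  have hmem : w * p.1 + p.2 ∈ PsiSet ℓ n a w := mem_image_of_mem _ hp
  rw [psi_eq_min' ⟨_, hmem⟩]
  exact min'_le _ _ hmem

theorem exists_mem_PL_psi_eq (hPL : (PL ℓ n a).Nonempty) (w : ℚ) :
    ∃ p ∈ PL ℓ n a, w * p.1 + p.2 = psi ℓ n a w := by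
  have hne : (PsiSet ℓ n a w).Nonempty := hPL.image _
  rw [psi_eq_min' hne]
  exact mem_image.1 (min'_mem _ hne)

theorem piF_psi (hℓ : 0 < ℓ) (hPL : (PL ℓ n a).Nonempty) (w : ℚ) :
    piF ℓ n a (psi ℓ n a w) = w := by
  set S := (PL ℓ n a).image fun p => (psi ℓ n a w - p.2) / p.1
  have hle : ∀ s ∈ S, s ≤ w := by
    simp only [S, mem_image]
    rintro _ ⟨p, hp, rfl⟩
    rw [div_le_iff₀ (fst_pos_of_mem_PL hℓ hp)]
    linarith [psi_le (w := w) hp]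
  have hw : w ∈ S := by
    obtain ⟨p, hp, hpw⟩ := exists_mem_PL_psi_eq hPL w
    refine mem_image.2 ⟨p, hp, ?_⟩
    rw [div_eq_iff (fst_pos_of_mem_PL hℓ hp).ne']
    linarith
  rw [piF, ← coe_max' ⟨w, hw⟩, le_antisymm (max'_le _ _ _ hle) (le_max' _ _ hw)]
  rfl

theorem neg_mem_slopeSet {p p' : ℚ × ℚ} (hp : p ∈ PL ℓ n a) (hp' : p' ∈ PL ℓ n a)
    (hne : p ≠ p') (h : w * p.1 + p.2 = psi ℓ n a w) (h' : w * p'.1 + p'.2 = psi ℓ n a w) :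
    -w ∈ slopeSet ℓ n a :=
  ⟨psi ℓ n a w, ⟨p, hp, p', hp', hne, by linarith, by linarith⟩,
    fun r hr => by linarith [psi_le (w := w) hr]⟩

theorem mem_VSet_of_neg_mem_slopeSet (h : -w ∈ slopeSet ℓ n a) : w ∈ VSet ℓ n a :=
  Set.mem_iUnion.2 ⟨0, -w, h, neg_neg w⟩

theorem piF_mem_VSet {v q : ℚ} (hv : v ∈ VSet ℓ n a) (hq : q ∈ PsiSet ℓ n a v) :
    piF ℓ n a q ∈ VSet ℓ n a := by
  obtain ⟨m, hm⟩ := Set.mem_iUnion.1 hv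
  exact Set.mem_iUnion.2 ⟨m + 1, Set.mem_biUnion hm (mem_coe.2 (mem_image_of_mem _ hq))⟩

theorem exists_lt_mem_support_of_unique_min (hℓ : 2 ≤ ℓ) {f : HahnSeries ℚ K}
    (hf : mahlerOp ℓ hℓ n a f = 0) (hw : w ∈ f.support) (hPL : (PL ℓ n a).Nonempty)
    (huniq : ∀ p ∈ PL ℓ n a, ∀ p' ∈ PL ℓ n a,
      w * p.1 + p.2 = psi ℓ n a w → w * p'.1 + p'.2 = psi ℓ n a w → p = p') :
    ∃ v ∈ f.support, v < w ∧ psi ℓ n a w ∈ PsiSet ℓ n a v := by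
  set q := psi ℓ n a w
  have hpow : ∀ i : ℕ, (0 : ℚ) < ℓ ^ i := fun i => pow_pos (by positivity) i
  have hattain : ∀ x : Σ _ : ℕ, ℕ, (q - x.2) / ℓ ^ x.1 = w ↔
      w * (newtonPoint ℓ x).1 + (newtonPoint ℓ x).2 = q := fun x => by
    rw [div_eq_iff (hpow x.1).ne', newtonPoint]
    constructor <;> intro h <;> linarith
  obtain ⟨p₀, hp₀, hp₀q⟩ := exists_mem_PL_psi_eq hPL w
  obtain ⟨x₀, hx₀, rfl⟩ := mem_PL_iff.1 hp₀
  have hsum : ∑ x ∈ termSupport n a, (a x.1).coeff x.2 * f.coeff ((q - x.2) / ℓ ^ x.1) = 0 := by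
    rw [← coeff_mahlerOp hℓ, hf, HahnSeries.coeff_zero]
  have hx₀ne : (a x₀.1).coeff x₀.2 * f.coeff ((q - x₀.2) / ℓ ^ x₀.1) ≠ 0 := by
    rw [(hattain x₀).2 hp₀q]
    exact mul_ne_zero (mem_support_iff.1 (mem_sigma.1 hx₀).2) hw
  obtain ⟨x, hx, hxx₀, hxne⟩ := exists_ne_ne_zero_of_sum_eq_zero hx₀ hsum hx₀ne
  have hxPL : newtonPoint ℓ x ∈ PL ℓ n a := newtonPoint_mem_PL hx
  refine ⟨(q - x.2) / ℓ ^ x.1, right_ne_zero_of_mul hxne, lt_of_le_of_ne ?_ fun h => ?_, ?_⟩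
  · have hle : q ≤ w * ℓ ^ x.1 + x.2 := psi_le hxPL
    rw [div_le_iff₀ (hpow x.1)]
    linarith
  · exact hxx₀ (newtonPoint_injective hℓ (huniq _ hxPL _ hp₀ ((hattain x).1 h) hp₀q))
  · refine mem_image.2 ⟨newtonPoint ℓ x, hxPL, ?_⟩
    simp only [newtonPoint]
    rw [div_mul_cancel₀ _ (hpow x.1).ne']
    ring

end Mahler

theorem stmt11_general {K : Type*} [Field K] (ℓ n : ℕ) (hℓ : 2 ≤ ℓ) (a : ℕ → Polynomial K)
    (h0 : a 0 ≠ 0) (f : HahnSeries ℚ K)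
    (hf : mahlerOp ℓ hℓ n a f = 0) :
    f.support ⊆ VSet ℓ n a := by
  have hPL : (PL ℓ n a).Nonempty := PL_nonempty h0
  intro w₀ hw₀
  refine f.isWF_support.induction hw₀ fun w hw IH => ?_
  by_cases hmin : ∀ p ∈ PL ℓ n a, ∀ p' ∈ PL ℓ n a,
      w * p.1 + p.2 = psi ℓ n a w → w * p'.1 + p'.2 = psi ℓ n a w → p = p'
  · obtain ⟨v, hv, hvw, hq⟩ := exists_lt_mem_support_of_unique_min hℓ hf hw hPL hmin
    simpa only [piF_psi (by omega) hPL w] using piF_mem_VSet (IH v hv hvw) hq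
  · push Not at hmin
    obtain ⟨p, hp, p', hp', h, h', hne⟩ := hmin
    exact mem_VSet_of_neg_mem_slopeSet (neg_mem_slopeSet hp hp' hne h h')

theorem stmt11 {K : Type*} [Field K] (ℓ n : ℕ) (hℓ : 2 ≤ ℓ) (a : ℕ → Polynomial K)
    (h0 : a 0 ≠ 0) (hn : a n ≠ 0) (f : HahnSeries ℚ K)
    (hf : mahlerOp ℓ hℓ n a f = 0) :
    f.support ⊆ VSet ℓ n a :=
  stmt11_general ℓ n hℓ a h0 f hf
end
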